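/- arXiv:2107.06553 — 4 statements merged into one kernel-verified Lean document; each statement's English description precedes it below -/
import Mathlib

section
/- The function u decomposes as u = u_S + u_BL^L + u_BL^R on [0,1], where u_S = G₀, u_BL^L(x) = ε G₁(x) exp(−(1/ε)∫₀ˣ √a(s) ds) and u_BL^R(x) = ε G₂(x) exp(−(1/ε)∫ₓ¹ √a(s) ds), and there exist constants C_j (0 ≤ j ≤ q), depending only on M, q and the C^q norm of a but not on ε, such that for all x ∈ [0,1] and 0 ≤ j ≤ q: |u_S^{(j)}(x)| ≤ C_j, |(u_BL^L)^{(j)}(x)| ≤ C_j ε^{1−j} e^{−βx/ε} and |(u_BL^R)^{(j)}(x)| ≤ C_j ε^{1−j} e^{−β(1−x)/ε}, where β = √a₀. -/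
/-!
Write `E` for either exponential factor, so that `E' = (ψ / ε) E` on `[0, 1]` with
`ψ = ∓√a`. Differentiating `ε G E` once replaces the coefficient `H` by `(ε H' + ψ H) / ε`,
so its `j`-th derivative is `ε ^ (1 - j) H_j E` with `H_0 = G`, `H_{j+1} = ε H_j' + ψ H_j`.
Because `ε ≤ 1`, the Leibniz rule bounds the derivatives of `H_j` independently of `ε`, once
those of `√a` are bounded; the latter follows from Faà di Bruno, since `a` takes values in the
compact interval `[a₀, M]` on which `√` is smooth. Finally `√a ≥ √a₀` bounds `E` by
`exp (-√a₀ x / ε)`, respectively `exp (-√a₀ (1 - x) / ε)`.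
-/

open Real Set Finset

def DerivsBoundedOn (k : ℕ) (f : ℝ → ℝ) (s : Set ℝ) (K : ℝ) : Prop :=
  ∀ m ≤ k, ∀ x ∈ s, |iteratedDerivWithin m f s x| ≤ K

namespace DerivsBoundedOn

variable {k : ℕ} {f g : ℝ → ℝ} {s : Set ℝ} {K L : ℝ}

theorem mono {k' : ℕ} {K' : ℝ} (h : DerivsBoundedOn k f s K) (hk : k' ≤ k) (hK : K ≤ K') :
    DerivsBoundedOn k' f s K' :=
  fun m hm x hx => (h m (hm.trans hk) x hx).trans hK

theorem derivWithin (h : DerivsBoundedOn (k + 1) f s K) :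
    DerivsBoundedOn k (derivWithin f s) s K := by
  intro m hm x hx
  rw [← iteratedDerivWithin_succ']
  exact h (m + 1) (by omega) x hx

theorem const_mul (hs : UniqueDiffOn ℝ s) (hf : ContDiffOn ℝ k f s) (h : DerivsBoundedOn k f s K)
    (c : ℝ) : DerivsBoundedOn k (fun y => c * f y) s (|c| * K) := by
  intro m hm x hx
  rw [iteratedDerivWithin_const_mul hx hs c ((hf.of_le (by exact_mod_cast hm)) x hx), abs_mul]
  exact mul_le_mul_of_nonneg_left (h m hm x hx) (abs_nonneg c)

theorem add (hs : UniqueDiffOn ℝ s) (hf : ContDiffOn ℝ k f s) (hg : ContDiffOn ℝ k g s)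
    (hfK : DerivsBoundedOn k f s K) (hgL : DerivsBoundedOn k g s L) :
    DerivsBoundedOn k (fun y => f y + g y) s (K + L) := by
  intro m hm x hx
  have hm' : (m : WithTop ℕ∞) ≤ k := by exact_mod_cast hm
  rw [show (fun y => f y + g y) = f + g from rfl,
    iteratedDerivWithin_add hx hs ((hf.of_le hm') x hx) ((hg.of_le hm') x hx)]
  exact (abs_add_le _ _).trans (add_le_add (hfK m hm x hx) (hgL m hm x hx))

theorem mul (hs : UniqueDiffOn ℝ s) (hf : ContDiffOn ℝ k f s) (hg : ContDiffOn ℝ k g s)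
    (hfK : DerivsBoundedOn k f s K) (hgL : DerivsBoundedOn k g s L) :
    DerivsBoundedOn k (fun y => f y * g y) s (2 ^ k * K * L) := by
  intro m hm x hx
  have hK : 0 ≤ K := (abs_nonneg _).trans (hfK 0 (Nat.zero_le _) x hx)
  have hL : 0 ≤ L := (abs_nonneg _).trans (hgL 0 (Nat.zero_le _) x hx)
  have hterm : ∀ i ∈ range (m + 1), (m.choose i : ℝ) * ‖iteratedFDerivWithin ℝ i f s x‖ *
      ‖iteratedFDerivWithin ℝ (m - i) g s x‖ ≤ m.choose i * (K * L) := by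
    intro i hi
    simp only [norm_iteratedFDerivWithin_eq_norm_iteratedDerivWithin, norm_eq_abs, mul_assoc]
    gcongr
    · exact hfK i (by grind) x hx
    · exact hgL (m - i) (by omega) x hx
  rw [← norm_eq_abs, ← norm_iteratedFDerivWithin_eq_norm_iteratedDerivWithin]
  calc _ ≤ _ := norm_iteratedFDerivWithin_mul_le hf hg hs hx (by exact_mod_cast hm)
    _ ≤ ∑ i ∈ range (m + 1), (m.choose i : ℝ) * (K * L) := sum_le_sum hterm
    _ = 2 ^ m * K * L := by rw [← sum_mul, ← Nat.cast_sum, Nat.sum_range_choose]; push_cast; ring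
    _ ≤ 2 ^ k * K * L := by gcongr; norm_num

end DerivsBoundedOn

noncomputable def layerCoeff (s : Set ℝ) (ε : ℝ) (ψ G : ℝ → ℝ) : ℕ → ℝ → ℝ
  | 0 => G
  | j + 1 => fun y => ε * derivWithin (layerCoeff s ε ψ G j) s y + ψ y * layerCoeff s ε ψ G j y

section layerCoeff

variable {s : Set ℝ} {ε : ℝ} {ψ G : ℝ → ℝ} {q : ℕ}

theorem contDiffOn_layerCoeff (hs : UniqueDiffOn ℝ s) (hψ : ContDiffOn ℝ q ψ s)
    (hG : ContDiffOn ℝ q G s) {j k : ℕ} (hjk : j + k ≤ q) :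
    ContDiffOn ℝ k (layerCoeff s ε ψ G j) s := by
  induction j generalizing k with
  | zero => exact hG.of_le (by exact_mod_cast (by omega : k ≤ q))
  | succ j ih =>
    have hH : ContDiffOn ℝ (k + 1 : ℕ) (layerCoeff s ε ψ G j) s := ih (by omega)
    exact (contDiffOn_const.mul (hH.derivWithin hs (by push_cast; rfl))).add
      ((hψ.of_le (by exact_mod_cast (by omega : k ≤ q))).mul (hH.of_le (by norm_cast; omega)))

theorem derivsBoundedOn_layerCoeff (hs : UniqueDiffOn ℝ s) (hε : 0 ≤ ε) (hε1 : ε ≤ 1)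
    {D M : ℝ} (hD : 0 ≤ D) (hM : 0 ≤ M)
    (hψ : ContDiffOn ℝ q ψ s) (hψD : DerivsBoundedOn q ψ s D)
    (hG : ContDiffOn ℝ q G s) (hGM : DerivsBoundedOn q G s M) {j k : ℕ} (hjk : j + k ≤ q) :
    DerivsBoundedOn k (layerCoeff s ε ψ G j) s (M * (1 + 2 ^ q * D) ^ j) := by
  induction j generalizing k with
  | zero => exact hGM.mono (by omega) (by rw [pow_zero, mul_one])
  | succ j ih =>
    have hH := contDiffOn_layerCoeff (ε := ε) hs hψ hG (by omega : j + (k + 1) ≤ q)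
    have hHk : ContDiffOn ℝ k (layerCoeff s ε ψ G j) s := hH.of_le (by norm_cast; omega)
    have hψk : ContDiffOn ℝ k ψ s := hψ.of_le (by exact_mod_cast (by omega : k ≤ q))
    have hεH' : DerivsBoundedOn k (fun y => ε * derivWithin (layerCoeff s ε ψ G j) s y) s
        (M * (1 + 2 ^ q * D) ^ j) :=
      (((ih (by omega)).derivWithin.const_mul hs (hH.derivWithin hs (by push_cast; rfl)) ε).mono
        le_rfl (by rw [abs_of_nonneg hε]; exact mul_le_of_le_one_left (by positivity) hε1))
    have hψH : DerivsBoundedOn k (fun y => ψ y * layerCoeff s ε ψ G j y) s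
        (2 ^ q * D * (M * (1 + 2 ^ q * D) ^ j)) :=
      ((hψD.mono (by omega) le_rfl).mul hs hψk hHk (ih (by omega))).mono le_rfl
        (by gcongr; norm_num; omega)
    exact (hεH'.add hs (contDiffOn_const.mul (hH.derivWithin hs (by push_cast; rfl)))
      (hψk.mul hHk) hψH).mono le_rfl (le_of_eq (by ring))

theorem iteratedDerivWithin_eq_layerCoeff (hs : UniqueDiffOn ℝ s) (hε : ε ≠ 0)
    (hψ : ContDiffOn ℝ q ψ s) (hG : ContDiffOn ℝ q G s) {E : ℝ → ℝ}
    (hE : ∀ x ∈ s, HasDerivWithinAt E (ψ x / ε * E x) s x) {j : ℕ} (hj : j ≤ q) {x : ℝ}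
    (hx : x ∈ s) :
    iteratedDerivWithin j (fun y => ε * G y * E y) s x
      = ε ^ ((1 : ℤ) - j) * layerCoeff s ε ψ G j x * E x := by
  induction j generalizing x with
  | zero => simp [layerCoeff]
  | succ j ih =>
    set H := layerCoeff s ε ψ G j
    have hH : HasDerivWithinAt H (derivWithin H s x) s x :=
      ((contDiffOn_layerCoeff hs hψ hG (by omega : j + 1 ≤ q)).differentiableOn
        one_ne_zero x hx).hasDerivWithinAt
    have hprod := (hH.const_mul (ε ^ ((1 : ℤ) - j))).fun_mul (hE x hx)
    rw [iteratedDerivWithin_succ,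
      derivWithin_congr (fun y hy => ih (by omega) hy) (ih (by omega) hx),
      hprod.derivWithin (hs x hx), show ((1 : ℤ) - j) = (1 - ↑(j + 1)) + 1 by push_cast; ring,
      zpow_add_one₀ hε]
    simp only [layerCoeff, H]
    field_simp

theorem abs_iteratedDerivWithin_layer_le (hs : UniqueDiffOn ℝ s) (hε : 0 < ε) (hε1 : ε ≤ 1)
    {D M : ℝ} (hD : 0 ≤ D) (hM : 0 ≤ M)
    (hψ : ContDiffOn ℝ q ψ s) (hψD : DerivsBoundedOn q ψ s D)
    (hG : ContDiffOn ℝ q G s) (hGM : DerivsBoundedOn q G s M) {E : ℝ → ℝ}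
    (hE : ∀ x ∈ s, HasDerivWithinAt E (ψ x / ε * E x) s x) {j : ℕ} (hj : j ≤ q) {x : ℝ}
    (hx : x ∈ s) :
    |iteratedDerivWithin j (fun y => ε * G y * E y) s x|
      ≤ M * (1 + 2 ^ q * D) ^ j * ε ^ ((1 : ℤ) - j) * |E x| := by
  have hH := derivsBoundedOn_layerCoeff hs hε.le hε1 hD hM hψ hψD hG hGM (by omega : j + 0 ≤ q)
    0 le_rfl x hx
  rw [iteratedDerivWithin_zero] at hH
  rw [iteratedDerivWithin_eq_layerCoeff hs hε.ne' hψ hG hE hj hx, abs_mul, abs_mul,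
    abs_of_pos (zpow_pos hε _)]
  calc _ ≤ ε ^ ((1 : ℤ) - j) * (M * (1 + 2 ^ q * D) ^ j) * |E x| := by gcongr
    _ = _ := by ring

end layerCoeff

theorem hasDerivWithinAt_integral_Icc_right {f : ℝ → ℝ} {a b x : ℝ}
    (hf : ContinuousOn f (Icc a b)) (hx : x ∈ Icc a b) :
    HasDerivWithinAt (fun u => ∫ t in a..u, f t) (f x) (Icc a b) x := by
  have : Fact (x ∈ Icc a b) := ⟨hx⟩
  exact intervalIntegral.integral_hasDerivWithinAt_right
    ((hf.mono (uIcc_subset_Icc (left_mem_Icc.2 (hx.1.trans hx.2)) hx)).intervalIntegrable)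
    (hf.stronglyMeasurableAtFilter_nhdsWithin measurableSet_Icc x) (hf x hx)

theorem hasDerivWithinAt_integral_Icc_left {f : ℝ → ℝ} {a b x : ℝ}
    (hf : ContinuousOn f (Icc a b)) (hx : x ∈ Icc a b) :
    HasDerivWithinAt (fun u => ∫ t in u..b, f t) (-f x) (Icc a b) x := by
  have : Fact (x ∈ Icc a b) := ⟨hx⟩
  exact intervalIntegral.integral_hasDerivWithinAt_left
    ((hf.mono (uIcc_subset_Icc hx (right_mem_Icc.2 (hx.1.trans hx.2)))).intervalIntegrable)
    (hf.stronglyMeasurableAtFilter_nhdsWithin measurableSet_Icc x) (hf x hx)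

theorem mul_sub_le_integral {f : ℝ → ℝ} {x y β : ℝ} (hxy : x ≤ y)
    (hf : ContinuousOn f (Icc x y)) (hβ : ∀ t ∈ Icc x y, β ≤ f t) :
    β * (y - x) ≤ ∫ t in x..y, f t := by
  have := intervalIntegral.integral_mono_on hxy
    (intervalIntegrable_const (μ := MeasureTheory.volume))
    (hf.mono (uIcc_subset_Icc (left_mem_Icc.2 hxy) (right_mem_Icc.2 hxy))).intervalIntegrable hβ
  rwa [intervalIntegral.integral_const, smul_eq_mul, mul_comm] at this

section layers

variable {q j : ℕ} {φ G : ℝ → ℝ} {ε β D M x : ℝ}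

theorem abs_iteratedDerivWithin_leftLayer_le (hε : 0 < ε) (hε1 : ε ≤ 1) (hD : 0 ≤ D)
    (hM : 0 ≤ M) (hφ : ContDiffOn ℝ q φ (Icc 0 1)) (hφD : DerivsBoundedOn q φ (Icc 0 1) D)
    (hβ : ∀ y ∈ Icc (0 : ℝ) 1, β ≤ φ y)
    (hG : ContDiffOn ℝ q G (Icc 0 1)) (hGM : DerivsBoundedOn q G (Icc 0 1) M)
    (hj : j ≤ q) (hx : x ∈ Icc (0 : ℝ) 1) :
    |iteratedDerivWithin j (fun y => ε * G y * exp (-(1 / ε) * ∫ s in (0 : ℝ)..y, φ s))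
        (Icc 0 1) x|
      ≤ M * (1 + 2 ^ q * D) ^ j * ε ^ ((1 : ℤ) - j) * exp (-β * x / ε) := by
  have hs : UniqueDiffOn ℝ (Icc (0 : ℝ) 1) := uniqueDiffOn_Icc one_pos
  have hψD := hφD.const_mul hs hφ (-1)
  rw [abs_neg, abs_one, one_mul] at hψD
  have hE : ∀ y ∈ Icc (0 : ℝ) 1, HasDerivWithinAt (fun y => exp (-(1 / ε) * ∫ s in (0 : ℝ)..y, φ s))
      (-1 * φ y / ε * exp (-(1 / ε) * ∫ s in (0 : ℝ)..y, φ s)) (Icc 0 1) y := fun y hy => by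
    convert ((hasDerivWithinAt_integral_Icc_right hφ.continuousOn hy).const_mul (-(1 / ε))).exp
      using 1
    ring
  have hexp : -(1 / ε) * ∫ s in (0 : ℝ)..x, φ s ≤ -β * x / ε := by
    have := mul_sub_le_integral hx.1 (hφ.continuousOn.mono (Icc_subset_Icc_right hx.2))
      (fun t ht => hβ t ⟨ht.1, ht.2.trans hx.2⟩)
    rw [show -β * x / ε = -(1 / ε) * (β * (x - 0)) by ring]
    exact mul_le_mul_of_nonpos_left this (by simp [hε.le])
  refine (abs_iteratedDerivWithin_layer_le hs hε hε1 hD hM (contDiffOn_const.mul hφ) hψD hG hGM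
    hE hj hx).trans ?_
  rw [abs_of_pos (exp_pos _)]
  gcongr

theorem abs_iteratedDerivWithin_rightLayer_le (hε : 0 < ε) (hε1 : ε ≤ 1) (hD : 0 ≤ D)
    (hM : 0 ≤ M) (hφ : ContDiffOn ℝ q φ (Icc 0 1)) (hφD : DerivsBoundedOn q φ (Icc 0 1) D)
    (hβ : ∀ y ∈ Icc (0 : ℝ) 1, β ≤ φ y)
    (hG : ContDiffOn ℝ q G (Icc 0 1)) (hGM : DerivsBoundedOn q G (Icc 0 1) M)
    (hj : j ≤ q) (hx : x ∈ Icc (0 : ℝ) 1) :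
    |iteratedDerivWithin j (fun y => ε * G y * exp (-(1 / ε) * ∫ s in y..(1 : ℝ), φ s))
        (Icc 0 1) x|
      ≤ M * (1 + 2 ^ q * D) ^ j * ε ^ ((1 : ℤ) - j) * exp (-β * (1 - x) / ε) := by
  have hs : UniqueDiffOn ℝ (Icc (0 : ℝ) 1) := uniqueDiffOn_Icc one_pos
  have hE : ∀ y ∈ Icc (0 : ℝ) 1, HasDerivWithinAt (fun y => exp (-(1 / ε) * ∫ s in y..(1 : ℝ), φ s))
      (φ y / ε * exp (-(1 / ε) * ∫ s in y..(1 : ℝ), φ s)) (Icc 0 1) y := fun y hy => by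
    convert ((hasDerivWithinAt_integral_Icc_left hφ.continuousOn hy).const_mul (-(1 / ε))).exp
      using 1
    ring
  have hexp : -(1 / ε) * ∫ s in x..(1 : ℝ), φ s ≤ -β * (1 - x) / ε := by
    have := mul_sub_le_integral hx.2 (hφ.continuousOn.mono (Icc_subset_Icc_left hx.1))
      (fun t ht => hβ t ⟨hx.1.trans ht.1, ht.2⟩)
    rw [show -β * (1 - x) / ε = -(1 / ε) * (β * (1 - x)) by ring]
    exact mul_le_mul_of_nonpos_left this (by simp [hε.le])
  refine (abs_iteratedDerivWithin_layer_le hs hε hε1 hD hM hφ hφD hG hGM hE hj hx).trans ?_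
  rw [abs_of_pos (exp_pos _)]
  gcongr

end layers

theorem exists_derivsBoundedOn_sqrt_comp (q : ℕ) {a₀ : ℝ} (ha₀ : 0 < a₀) (M : ℝ) :
    ∃ D, 0 ≤ D ∧ ∀ {s : Set ℝ} {a : ℝ → ℝ}, UniqueDiffOn ℝ s → ContDiffOn ℝ q a s →
      (∀ x ∈ s, a₀ ≤ a x) → DerivsBoundedOn q a s M →
      DerivsBoundedOn q (fun y => √(a y)) s D := by
  have hsqrt : ContDiffOn ℝ q (√·) (Ioi 0) := fun y hy => (contDiffAt_sqrt hy.ne').contDiffWithinAt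
  have hcont : ContinuousOn (fun y => ∑ i ∈ range (q + 1),
      ‖iteratedFDerivWithin ℝ i (√·) (Ioi 0) y‖) (Icc a₀ M) :=
    continuousOn_finsetSum _ fun i hi => ((hsqrt.continuousOn_iteratedFDerivWithin
      (by exact_mod_cast Nat.lt_succ_iff.1 (mem_range.1 hi)) isOpen_Ioi.uniqueDiffOn).norm).mono
      fun y hy => ha₀.trans_le hy.1
  obtain ⟨C, hC⟩ := isCompact_Icc.exists_bound_of_continuousOn hcont
  refine ⟨q.factorial * max C 0 * max 1 M ^ q, by positivity, ?_⟩
  intro s a hs ha ha₀a haM m hm x hx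
  have hax : a x ∈ Icc a₀ M :=
    ⟨ha₀a x hx, (le_abs_self _).trans (by simpa using haM 0 (Nat.zero_le _) x hx)⟩
  have hsqrtC : ∀ i ≤ m, ‖iteratedFDerivWithin ℝ i (√·) (Ioi 0) (a x)‖ ≤ max C 0 := fun i hi =>
    calc _ ≤ ∑ i ∈ range (q + 1), ‖iteratedFDerivWithin ℝ i (√·) (Ioi 0) (a x)‖ :=
          single_le_sum (fun i _ => norm_nonneg _) (mem_range.2 (by omega))
      _ ≤ max C 0 := (le_abs_self _).trans ((hC _ hax).trans (le_max_left _ _))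
  have haD : ∀ i, 1 ≤ i → i ≤ m → ‖iteratedFDerivWithin ℝ i a s x‖ ≤ max 1 M ^ i :=
    fun i hi him => by
      rw [norm_iteratedFDerivWithin_eq_norm_iteratedDerivWithin, norm_eq_abs]
      exact (haM i (him.trans hm) x hx).trans
        ((le_max_right 1 M).trans (le_self_pow₀ (le_max_left 1 M) (by omega)))
  rw [← norm_eq_abs, ← norm_iteratedFDerivWithin_eq_norm_iteratedDerivWithin]
  calc _ ≤ m.factorial * max C 0 * max 1 M ^ m :=
        norm_iteratedFDerivWithin_comp_le hsqrt ha (by exact_mod_cast hm)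
          isOpen_Ioi.uniqueDiffOn hs (fun y hy => ha₀.trans_le (ha₀a y hy)) hx hsqrtC haD
    _ ≤ q.factorial * max C 0 * max 1 M ^ q := by
        gcongr
        exact le_max_left 1 M

/-- boundary-layer decomposition `u = u_S + u_BL^L + u_BL^R` of a
function having the Moser-type representation, with derivative bounds that are
uniform in `ε` (the constants `C_j` depend only on `M`, `q`; `β = √a₀`). -/
theorem stmt_1 (q : ℕ) (M a₀ : ℝ) (hM : 0 < M) (ha₀ : 0 < a₀) :
    ∃ C : ℕ → ℝ, (∀ j, 0 < C j) ∧
    ∀ (ε : ℝ), ε ∈ Set.Ioc (0:ℝ) 1 →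
    ∀ (a G₀ G₁ G₂ u : ℝ → ℝ),
      ContDiffOn ℝ q a (Set.Icc 0 1) →
      (∀ x ∈ Set.Icc (0:ℝ) 1, a₀ ≤ a x) →
      (∀ m, m ≤ q → ∀ x ∈ Set.Icc (0:ℝ) 1,
        |iteratedDerivWithin m a (Set.Icc 0 1) x| ≤ M) →
      ContDiffOn ℝ q G₀ (Set.Icc 0 1) →
      ContDiffOn ℝ q G₁ (Set.Icc 0 1) →
      ContDiffOn ℝ q G₂ (Set.Icc 0 1) →
      (∀ m, m ≤ q → ∀ x ∈ Set.Icc (0:ℝ) 1,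
        |iteratedDerivWithin m G₀ (Set.Icc 0 1) x| ≤ M) →
      (∀ m, m ≤ q → ∀ x ∈ Set.Icc (0:ℝ) 1,
        |iteratedDerivWithin m G₁ (Set.Icc 0 1) x| ≤ M) →
      (∀ m, m ≤ q → ∀ x ∈ Set.Icc (0:ℝ) 1,
        |iteratedDerivWithin m G₂ (Set.Icc 0 1) x| ≤ M) →
      (∀ x ∈ Set.Icc (0:ℝ) 1,
        u x = G₀ x
          + ε * G₁ x * Real.exp (-(1/ε) * ∫ s in (0:ℝ)..x, Real.sqrt (a s))
          + ε * G₂ x * Real.exp (-(1/ε) * ∫ s in x..(1:ℝ), Real.sqrt (a s))) →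
      -- the decomposition u = u_S + u_BL^L + u_BL^R ...
      (∀ x ∈ Set.Icc (0:ℝ) 1,
        u x = G₀ x
          + (fun y => ε * G₁ y * Real.exp (-(1/ε) * ∫ s in (0:ℝ)..y, Real.sqrt (a s)) ) x
          + (fun y => ε * G₂ y * Real.exp (-(1/ε) * ∫ s in y..(1:ℝ), Real.sqrt (a s))) x) ∧
      -- ... together with the uniform derivative bounds, with β = √a₀
      (∀ j, j ≤ q → ∀ x ∈ Set.Icc (0:ℝ) 1,
        |iteratedDerivWithin j G₀ (Set.Icc 0 1) x| ≤ C j ∧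
        |iteratedDerivWithin j
            (fun y => ε * G₁ y * Real.exp (-(1/ε) * ∫ s in (0:ℝ)..y, Real.sqrt (a s)))
            (Set.Icc 0 1) x|
          ≤ C j * ε ^ ((1:ℤ) - (j:ℤ)) * Real.exp (-(Real.sqrt a₀) * x / ε) ∧
        |iteratedDerivWithin j
            (fun y => ε * G₂ y * Real.exp (-(1/ε) * ∫ s in y..(1:ℝ), Real.sqrt (a s)))
            (Set.Icc 0 1) x|
          ≤ C j * ε ^ ((1:ℤ) - (j:ℤ)) * Real.exp (-(Real.sqrt a₀) * (1 - x) / ε)) := by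
  obtain ⟨D, hD, hsqrt⟩ := exists_derivsBoundedOn_sqrt_comp q ha₀ M
  refine ⟨fun j => M * (1 + 2 ^ q * D) ^ j, fun j => by positivity, ?_⟩
  rintro ε ⟨hε, hε1⟩ a G₀ G₁ G₂ u ha ha₀a haM _ hG₁ hG₂ hG₀M hG₁M hG₂M hu
  have hφ : ContDiffOn ℝ q (fun y => √(a y)) (Icc 0 1) :=
    ha.sqrt fun y hy => (ha₀.trans_le (ha₀a y hy)).ne'
  have hφD := hsqrt (uniqueDiffOn_Icc one_pos) ha ha₀a haM
  have hβ : ∀ y ∈ Icc (0 : ℝ) 1, √a₀ ≤ √(a y) := fun y hy => sqrt_le_sqrt (ha₀a y hy)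
  refine ⟨hu, fun j hj x hx => ⟨?_,
    abs_iteratedDerivWithin_leftLayer_le hε hε1 hD hM.le hφ hφD hβ hG₁ hG₁M hj hx,
    abs_iteratedDerivWithin_rightLayer_le hε hε1 hD hM.le hφ hφD hβ hG₂ hG₂M hj hx⟩⟩
  exact (hG₀M j hj x hx).trans
    (le_mul_of_one_le_right hM.le (one_le_pow₀ (le_add_of_nonneg_right (by positivity))))
end

section
/- In the graded region of the eXp mesh the nodes are strictly increasing, 0 = x₀ < x₁ < ⋯ < x_{N/4−1}, and for every 1 ≤ j ≤ N/4−1 the mesh width h_j = x_j − x_{j−1} satisfies h_j ≤ (ε/β)(p+1) N^{−1} max_{t ∈ [(j−1)/N, j/N]} φ′(t) ≤ (ε/β)(p+1) e^{βx_j/((p+1)ε)}. -/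
/-- The constant `C_{p,ε} = 1 − exp(−β/((p+1)ε))`. -/
noncomputable def Cpe (p : ℕ) (β ε : ℝ) : ℝ :=
  1 - Real.exp (-(β / (((p:ℝ) + 1) * ε)))

/-- The mesh generating function `φ(t) = −ln(1 − 4 C_{p,ε} t)`. -/
noncomputable def phiFun (c : ℝ) : ℝ → ℝ := fun t => -Real.log (1 - 4 * c * t)

/-- The graded nodes `x_j = (ε/β)(p+1)φ(j/N)` of the eXp mesh. -/
noncomputable def gradedNode (p N : ℕ) (β ε : ℝ) (j : ℕ) : ℝ :=
  (ε / β) * ((p:ℝ) + 1) * phiFun (Cpe p β ε) ((j:ℝ) / (N:ℝ))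

/-!
Write `c = C_{p,ε}` and `K = (ε/β)(p+1)`, so that `x_j = K φ(j/N)`. On the graded region
`4c·t < 1`, where `φ` is increasing and `φ'(t) = 4c/(1 - 4ct)` is increasing as well, so the
maximum of `φ'` over `[(j-1)/N, j/N]` is attained at the right end point. The width bound is
`ln x ≤ x - 1` applied to `x = (1 - 4c(j-1)/N)/(1 - 4cj/N)`, and the last bound holds because
`β x_j/((p+1)ε) = φ(j/N)`, `e^{φ(t)} = 1/(1 - 4ct)` and `4c ≤ 4 ≤ N`.
-/

open Real Set

section phiFun

variable {c : ℝ}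

theorem phiFun_zero : phiFun c 0 = 0 := by
  simp [phiFun]

theorem hasDerivAt_phiFun {t : ℝ} (ht : 1 - 4 * c * t ≠ 0) :
    HasDerivAt (phiFun c) (4 * c / (1 - 4 * c * t)) t := by
  have hlin : HasDerivAt (fun s : ℝ => 1 - 4 * c * s) (-(4 * c)) t := by
    simpa using ((hasDerivAt_id t).const_mul (4 * c)).const_sub 1
  rw [show 4 * c / (1 - 4 * c * t) = -((1 - 4 * c * t)⁻¹ * -(4 * c)) by ring]
  exact ((hasDerivAt_log ht).comp t hlin).neg

theorem exp_phiFun {t : ℝ} (ht : 0 < 1 - 4 * c * t) : exp (phiFun c t) = (1 - 4 * c * t)⁻¹ := by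
  rw [phiFun, exp_neg, exp_log ht]

theorem phiFun_lt_phiFun (hc : 0 < c) {s t : ℝ} (hst : s < t) (ht : 4 * c * t < 1) :
    phiFun c s < phiFun c t := by
  have hlt : 1 - 4 * c * t < 1 - 4 * c * s := by nlinarith
  exact neg_lt_neg (log_lt_log (by linarith) hlt)

theorem phiFun_sub_phiFun_le {a b : ℝ} (ha : 0 < 1 - 4 * c * a) (hb : 0 < 1 - 4 * c * b) :
    phiFun c b - phiFun c a ≤ (b - a) * (4 * c / (1 - 4 * c * b)) := by
  calc phiFun c b - phiFun c a = log ((1 - 4 * c * a) / (1 - 4 * c * b)) := by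
        rw [log_div ha.ne' hb.ne', phiFun, phiFun]; ring
    _ ≤ (1 - 4 * c * a) / (1 - 4 * c * b) - 1 := log_le_sub_one_of_pos (div_pos ha hb)
    _ = (b - a) * (4 * c / (1 - 4 * c * b)) := by field_simp; ring

theorem isGreatest_deriv_phiFun_image_Icc (hc : 0 ≤ c) {a b : ℝ} (hab : a ≤ b)
    (hb : 4 * c * b < 1) :
    IsGreatest (deriv (phiFun c) '' Icc a b) (4 * c / (1 - 4 * c * b)) := by
  have hb' : 0 < 1 - 4 * c * b := by linarith
  refine ⟨⟨b, right_mem_Icc.mpr hab, (hasDerivAt_phiFun hb'.ne').deriv⟩, ?_⟩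
  rintro _ ⟨s, ⟨-, hsb⟩, rfl⟩
  have hle : 1 - 4 * c * b ≤ 1 - 4 * c * s := by nlinarith
  rw [(hasDerivAt_phiFun (by linarith : 1 - 4 * c * s ≠ 0)).deriv]
  exact div_le_div_of_nonneg_left (by positivity) hb' hle

theorem mul_div_le_exp_phiFun {h b : ℝ} (h4c : 4 * c * h ≤ 1) (hb : 4 * c * b < 1) :
    h * (4 * c / (1 - 4 * c * b)) ≤ exp (phiFun c b) := by
  have hb' : 0 < 1 - 4 * c * b := by linarith
  rw [exp_phiFun hb', ← mul_div_assoc, mul_comm h, div_eq_mul_inv]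
  exact mul_le_of_le_one_left (by positivity) h4c

end phiFun

theorem Cpe_pos {p : ℕ} {β ε : ℝ} (hβ : 0 < β) (hε : 0 < ε) : 0 < Cpe p β ε := by
  have : exp (-(β / (((p : ℝ) + 1) * ε))) < 1 := exp_lt_one_iff.mpr (by simp; positivity)
  rw [Cpe]; linarith

theorem Cpe_lt_one (p : ℕ) (β ε : ℝ) : Cpe p β ε < 1 := by
  rw [Cpe]; linarith [exp_pos (-(β / (((p : ℝ) + 1) * ε)))]

theorem four_mul_mul_div_lt_one {c : ℝ} (hc : c ≤ 1) {N j : ℕ} (hj : j ≤ N / 4 - 1) :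
    4 * c * ((j : ℝ) / N) < 1 := by
  rcases Nat.eq_zero_or_pos N with rfl | hN
  · simp
  have hjN : (4 * j : ℝ) < N := by exact_mod_cast (by omega : 4 * j < N)
  have hfrac : 4 * ((j : ℝ) / N) < 1 := by
    rw [← mul_div_assoc, div_lt_one (by positivity)]; exact hjN
  nlinarith [show (0 : ℝ) ≤ j / N by positivity]

theorem mul_gradedNode_div {p N : ℕ} {β ε : ℝ} (hβ : β ≠ 0) (hε : ε ≠ 0) (j : ℕ) :
    β * gradedNode p N β ε j / (((p : ℝ) + 1) * ε) = phiFun (Cpe p β ε) ((j : ℝ) / N) := by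
  rw [gradedNode]
  field_simp

theorem stmt_2_general (p N : ℕ)
    (β ε : ℝ) (hβ : 0 < β) (hε : ε ∈ Set.Ioc (0:ℝ) 1) :
    gradedNode p N β ε 0 = 0 ∧
    (∀ i j : ℕ, i < j → j ≤ N / 4 - 1 →
      gradedNode p N β ε i < gradedNode p N β ε j) ∧
    ∀ j : ℕ, 1 ≤ j → j ≤ N / 4 - 1 →
      gradedNode p N β ε j - gradedNode p N β ε (j - 1)
          ≤ (ε / β) * ((p:ℝ) + 1) * (N:ℝ)⁻¹ *
              sSup (deriv (phiFun (Cpe p β ε)) ''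
                Set.Icc (((j:ℝ) - 1) / (N:ℝ)) ((j:ℝ) / (N:ℝ))) ∧
      (ε / β) * ((p:ℝ) + 1) * (N:ℝ)⁻¹ *
              sSup (deriv (phiFun (Cpe p β ε)) ''
                Set.Icc (((j:ℝ) - 1) / (N:ℝ)) ((j:ℝ) / (N:ℝ)))
          ≤ (ε / β) * ((p:ℝ) + 1) *
              Real.exp (β * gradedNode p N β ε j / (((p:ℝ) + 1) * ε)) := by
  set c := Cpe p β ε
  have hc0 : 0 < c := Cpe_pos hβ hε.1
  have hc1 : c ≤ 1 := (Cpe_lt_one p β ε).le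
  have hK : 0 < ε / β * ((p : ℝ) + 1) := by have := hε.1; positivity
  refine ⟨by simp [gradedNode, phiFun_zero], fun i j hij hj => ?_, fun j hj1 hj => ?_⟩
  · have hN : (0 : ℝ) < N := by exact_mod_cast (by omega : 0 < N)
    exact mul_lt_mul_of_pos_left
      (phiFun_lt_phiFun hc0 (by gcongr) (four_mul_mul_div_lt_one hc1 hj)) hK
  have hN : (4 : ℝ) ≤ N := by exact_mod_cast (by omega : 4 ≤ N)
  have hb := four_mul_mul_div_lt_one hc1 hj
  have ha : 0 < 1 - 4 * c * (((j : ℝ) - 1) / N) := by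
    have : ((j : ℝ) - 1) / N ≤ j / N := by gcongr; linarith
    nlinarith
  rw [(isGreatest_deriv_phiFun_image_Icc hc0.le (by gcongr; linarith) hb).csSup_eq, mul_assoc]
  constructor
  · calc gradedNode p N β ε j - gradedNode p N β ε (j - 1)
        = ε / β * (p + 1) * (phiFun c (j / N) - phiFun c ((j - 1) / N)) := by
          rw [gradedNode, gradedNode, Nat.cast_pred hj1]; ring
      _ ≤ ε / β * (p + 1) * ((j / N - (j - 1) / N) * (4 * c / (1 - 4 * c * (j / N)))) := by
          gcongr; exact phiFun_sub_phiFun_le ha (by linarith)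
      _ = ε / β * (p + 1) * ((N : ℝ)⁻¹ * (4 * c / (1 - 4 * c * (j / N)))) := by
          congr 2; field_simp; ring
  · rw [mul_gradedNode_div hβ.ne' hε.1.ne']
    refine mul_le_mul_of_nonneg_left (mul_div_le_exp_phiFun ?_ hb) hK.le
    rw [← div_eq_mul_inv, div_le_one (by linarith)]
    linarith

/-- in the graded region of the eXp mesh the nodes are strictly
increasing, `0 = x₀ < x₁ < ⋯ < x_{N/4−1}`, and each mesh width satisfies
`h_j ≤ (ε/β)(p+1)N⁻¹ max_{[(j−1)/N, j/N]} φ′ ≤ (ε/β)(p+1) e^{βx_j/((p+1)ε)}`. -/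
theorem stmt_2 (p N : ℕ) (hp : 3 ≤ p) (hN : 8 ≤ N) (hdvd : 4 ∣ N)
    (β ε : ℝ) (hβ : 0 < β) (hε : ε ∈ Set.Ioc (0:ℝ) 1) :
    gradedNode p N β ε 0 = 0 ∧
    (∀ i j : ℕ, i < j → j ≤ N / 4 - 1 →
      gradedNode p N β ε i < gradedNode p N β ε j) ∧
    ∀ j : ℕ, 1 ≤ j → j ≤ N / 4 - 1 →
      gradedNode p N β ε j - gradedNode p N β ε (j - 1)
          ≤ (ε / β) * ((p:ℝ) + 1) * (N:ℝ)⁻¹ *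
              sSup (deriv (phiFun (Cpe p β ε)) ''
                Set.Icc (((j:ℝ) - 1) / (N:ℝ)) ((j:ℝ) / (N:ℝ))) ∧
      (ε / β) * ((p:ℝ) + 1) * (N:ℝ)⁻¹ *
              sSup (deriv (phiFun (Cpe p β ε)) ''
                Set.Icc (((j:ℝ) - 1) / (N:ℝ)) ((j:ℝ) / (N:ℝ)))
          ≤ (ε / β) * ((p:ℝ) + 1) *
              Real.exp (β * gradedNode p N β ε j / (((p:ℝ) + 1) * ε)) :=
  stmt_2_general p N β ε hβ hε
end

section
/- If (ε/β)(p+1) ln(N−4) < 1, then e^{−βx_{N/4−1}/ε} + e^{−β(1−x_{3N/4+1})/ε} ≤ C N^{−(p+1)}, where C depends only on p (one may take C = 2·6^{p+1}). -/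
/-- The nodes of the exponentially graded (eXp) mesh on `[0,1]`:
graded on `[0, x_{N/4−1}]` and `[x_{3N/4+1}, 1]`, uniform (with `N/2+2`
equal subintervals of `[x_{N/4−1}, x_{3N/4+1}]`) in between. -/
noncomputable def expNode (p N : ℕ) (β ε : ℝ) (j : ℕ) : ℝ :=
  if j ≤ N / 4 - 1 then gradedNode p N β ε j
  else if j ≤ 3 * N / 4 then
    gradedNode p N β ε (N / 4 - 1) +
      ((1 - 2 * gradedNode p N β ε (N / 4 - 1)) / ((N:ℝ) / 2 + 2)) *
        ((j:ℝ) - ((N:ℝ) / 4 - 1))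
  else 1 - (ε / β) * ((p:ℝ) + 1) * phiFun (Cpe p β ε) (((N - j : ℕ):ℝ) / (N:ℝ))

/-!
By the symmetry of the mesh both exponentials equal `s^(p+1)`, where
`s = 1 − 4 C_{p,ε} (N/4 − 1)/N = (4 + (1 − C_{p,ε})(N − 4))/N`, since the mesh is built so
that `exp(−β x_j / ε) = (1 − 4 C_{p,ε} j/N)^(p+1)` on the graded part. The hypothesis
`(ε/β)(p+1) ln(N − 4) < 1` says exactly that `1 − C_{p,ε} < 1/(N − 4)`, hence `s ≤ 5/N`.
-/

open Real

section Mesh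

variable {p N : ℕ} {β ε : ℝ}

lemma expNode_of_le {j : ℕ} (hj : j ≤ N / 4 - 1) :
    expNode p N β ε j = gradedNode p N β ε j := by
  rw [expNode, if_pos hj]

lemma one_sub_expNode_of_lt {j : ℕ} (hj : 3 * N / 4 < j) :
    1 - expNode p N β ε j = gradedNode p N β ε (N - j) := by
  rw [expNode, if_neg (by omega), if_neg (by omega), gradedNode, sub_sub_cancel]

lemma Cpe_le_one : Cpe p β ε ≤ 1 :=
  sub_le_self _ (exp_pos _).le

lemma exp_neg_mul_gradedNode_div (hβ : β ≠ 0) (hε : ε ≠ 0) {j : ℕ}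
    (hpos : 0 < 1 - 4 * Cpe p β ε * (j / N)) :
    exp (-(β * gradedNode p N β ε j / ε)) = (1 - 4 * Cpe p β ε * (j / N)) ^ (p + 1) := by
  have hexponent : -(β * gradedNode p N β ε j / ε)
      = ((p + 1 : ℕ) : ℝ) * log (1 - 4 * Cpe p β ε * (j / N)) := by
    rw [gradedNode, phiFun]
    push_cast
    field_simp
  rw [hexponent, exp_nat_mul, exp_log hpos]

lemma one_sub_Cpe_lt_inv (hβ : 0 < β) (hε : 0 < ε) {n : ℝ} (hn : 0 < n)
    (hsp : (ε / β) * ((p:ℝ) + 1) * log n < 1) :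
    1 - Cpe p β ε < n⁻¹ := by
  have hlog : log n < β / (((p:ℝ) + 1) * ε) := by
    rw [lt_div_iff₀ (by positivity)]
    calc log n * (((p:ℝ) + 1) * ε) = β * ((ε / β) * ((p:ℝ) + 1) * log n) := by
          field_simp
      _ < β * 1 := by gcongr
      _ = β := mul_one β
  rw [Cpe, sub_sub_cancel, ← exp_log hn, ← exp_neg, exp_lt_exp]
  linarith

end Mesh

section Estimates

variable {c n : ℝ}

lemma one_sub_four_mul_div_eq (hn : n ≠ 0) :
    1 - 4 * c * ((n / 4 - 1) / n) = (4 + (1 - c) * (n - 4)) / n := by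
  field_simp
  ring

lemma one_sub_four_mul_div_pos (hc : c ≤ 1) (hn : 4 < n) :
    0 < 1 - 4 * c * ((n / 4 - 1) / n) := by
  rw [one_sub_four_mul_div_eq (by linarith)]
  have : 0 ≤ (1 - c) * (n - 4) := mul_nonneg (by linarith) (by linarith)
  positivity

lemma one_sub_four_mul_div_le (hn : 4 < n) (hc : 1 - c < (n - 4)⁻¹) :
    1 - 4 * c * ((n / 4 - 1) / n) ≤ 5 / n := by
  rw [one_sub_four_mul_div_eq (by linarith)]
  have : (1 - c) * (n - 4) < 1 := by
    rwa [← lt_div_iff₀ (by linarith), one_div]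
  gcongr
  linarith

lemma pow_add_pow_le_of_le_div {s : ℝ} (p : ℕ) (hn : 0 < n) (hs0 : 0 ≤ s) (hs : s ≤ 5 / n) :
    s ^ (p + 1) + s ^ (p + 1) ≤ 2 * 6 ^ (p + 1) * n ^ (-((p:ℤ) + 1)) := by
  have hs6 : s ≤ 6 / n := hs.trans (by gcongr; norm_num)
  have hzpow : n ^ (-((p:ℤ) + 1)) = (n ^ (p + 1))⁻¹ := by
    rw [← zpow_natCast, ← zpow_neg]
    push_cast
    rfl
  calc s ^ (p + 1) + s ^ (p + 1) ≤ 2 * (6 / n) ^ (p + 1) := by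
        rw [← two_mul]; gcongr
    _ = 2 * 6 ^ (p + 1) * n ^ (-((p:ℤ) + 1)) := by
        rw [hzpow, div_pow, div_eq_mul_inv, mul_assoc]

end Estimates

lemma natCast_div_four_sub_one {N : ℕ} (hdvd : 4 ∣ N) (hN : 4 ≤ N) :
    ((N / 4 - 1 : ℕ) : ℝ) = (N : ℝ) / 4 - 1 := by
  obtain ⟨m, rfl⟩ := hdvd
  rw [Nat.mul_div_cancel_left m (by norm_num), Nat.cast_sub (by omega)]
  push_cast
  ring

theorem stmt_3_general (p N : ℕ) (hN : 8 ≤ N) (hdvd : 4 ∣ N)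
    (β ε : ℝ) (hβ : 0 < β) (hε : ε ∈ Set.Ioc (0:ℝ) 1)
    (hsp : (ε / β) * ((p:ℝ) + 1) * Real.log ((N:ℝ) - 4) < 1) :
    Real.exp (-(β * expNode p N β ε (N / 4 - 1) / ε))
      + Real.exp (-(β * (1 - expNode p N β ε (3 * N / 4 + 1)) / ε))
      ≤ 2 * 6 ^ (p + 1) * (N:ℝ) ^ (-((p:ℤ) + 1)) := by
  have hN4 : (4:ℝ) < N := by exact_mod_cast (by omega : 4 < N)
  have hcast := natCast_div_four_sub_one hdvd (by omega)
  have hs0 := one_sub_four_mul_div_pos (Cpe_le_one (p := p) (β := β) (ε := ε)) hN4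
  have hs5 := one_sub_four_mul_div_le hN4
    (one_sub_Cpe_lt_inv hβ hε.1 (by linarith) hsp)
  rw [expNode_of_le le_rfl, one_sub_expNode_of_lt (Nat.lt_succ_self _),
    show N - (3 * N / 4 + 1) = N / 4 - 1 by omega,
    exp_neg_mul_gradedNode_div hβ.ne' hε.1.ne' (by rwa [hcast]), hcast]
  exact pow_add_pow_le_of_le_div p (by linarith) hs0.le hs5

/-- if `(ε/β)(p+1)ln(N−4) < 1` then
`e^{−βx_{N/4−1}/ε} + e^{−β(1−x_{3N/4+1})/ε} ≤ C N^{−(p+1)}`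
with `C = 2·6^{p+1}` (depending only on `p`). -/
theorem stmt_3 (p N : ℕ) (hp : 3 ≤ p) (hN : 8 ≤ N) (hdvd : 4 ∣ N)
    (β ε : ℝ) (hβ : 0 < β) (hε : ε ∈ Set.Ioc (0:ℝ) 1)
    (hsp : (ε / β) * ((p:ℝ) + 1) * Real.log ((N:ℝ) - 4) < 1) :
    Real.exp (-(β * expNode p N β ε (N / 4 - 1) / ε))
      + Real.exp (-(β * (1 - expNode p N β ε (3 * N / 4 + 1)) / ε))
      ≤ 2 * 6 ^ (p + 1) * (N:ℝ) ^ (-((p:ℤ) + 1)) :=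
  stmt_3_general p N hN hdvd β ε hβ hε hsp
end

section
/- One has the bound ‖Πu − ⟨Πu, u_k^h⟩ u_k^h‖ ≤ ρ ‖u − Πu‖, where ρ = max_{j ≠ k} |λ| / |λ − λ_j^h| and ‖·‖ is the norm induced by the inner product. -/
/-!
Testing the Ritz condition against `u_j^h` gives `(λ_j^h - λ) ⟨Πu, u_j^h⟩ = λ ⟨u - Πu, u_j^h⟩`,
so for `j ≠ k` the `j`-th coefficient of `Πu` is at most `ρ` times that of `u - Πu`. Parseval in
`W` for `Πu - ⟨Πu, u_k^h⟩ u_k^h` and Bessel's inequality for `u - Πu` give the bound.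
-/

open scoped RealInnerProductSpace

namespace Orthonormal

variable {V ι : Type*} [NormedAddCommGroup V] [InnerProductSpace ℝ V] {v : ι → V}

theorem eq_sum_inner_smul_of_mem_span [Fintype ι] (hv : Orthonormal ℝ v) {x : V}
    (hx : x ∈ Submodule.span ℝ (Set.range v)) : x = ∑ j, ⟪x, v j⟫ • v j := by
  obtain ⟨a, rfl⟩ := (Submodule.mem_span_range_iff_exists_fun ℝ).mp hx
  simp_rw [hv.inner_left_fintype, conj_trivial]

theorem norm_sub_inner_smul_sq_of_mem_span [Fintype ι] [DecidableEq ι]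
    (hv : Orthonormal ℝ v) {x : V}
    (hx : x ∈ Submodule.span ℝ (Set.range v)) (k : ι) :
    ‖x - ⟪x, v k⟫ • v k‖ ^ 2 = ∑ j ∈ Finset.univ.erase k, ⟪x, v j⟫ ^ 2 := by
  have hrest : x - ⟪x, v k⟫ • v k = ∑ j ∈ Finset.univ.erase k, ⟪x, v j⟫ • v j := by
    rw [sub_eq_iff_eq_add, Finset.sum_erase_add _ _ (Finset.mem_univ k)]
    exact hv.eq_sum_inner_smul_of_mem_span hx
  rw [hrest, ← real_inner_self_eq_norm_sq, hv.inner_sum]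
  simp_rw [conj_trivial, sq]

theorem sum_inner_sq_le (hv : Orthonormal ℝ v) (s : Finset ι) (y : V) :
    ∑ j ∈ s, ⟪y, v j⟫ ^ 2 ≤ ‖y‖ ^ 2 := by
  convert hv.sum_inner_products_le (𝕜 := ℝ) y (s := s) using 2 with j
  rw [Real.norm_eq_abs, sq_abs, real_inner_comm]

theorem norm_sub_inner_smul_le_of_abs_inner_le [Fintype ι] (hv : Orthonormal ℝ v) {x y : V}
    (hx : x ∈ Submodule.span ℝ (Set.range v)) (k : ι) {ρ : ℝ} (hρ : 0 ≤ ρ)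
    (hcoord : ∀ j, j ≠ k → |⟪x, v j⟫| ≤ ρ * |⟪y, v j⟫|) :
    ‖x - ⟪x, v k⟫ • v k‖ ≤ ρ * ‖y‖ := by
  classical
  refine (pow_le_pow_iff_left₀ (norm_nonneg _) (by positivity) two_ne_zero).mp ?_
  calc ‖x - ⟪x, v k⟫ • v k‖ ^ 2 = ∑ j ∈ Finset.univ.erase k, ⟪x, v j⟫ ^ 2 :=
        hv.norm_sub_inner_smul_sq_of_mem_span hx k
    _ ≤ ∑ j ∈ Finset.univ.erase k, ρ ^ 2 * ⟪y, v j⟫ ^ 2 := by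
        refine Finset.sum_le_sum fun j hj => ?_
        rw [← sq_abs, ← sq_abs ⟪y, v j⟫, ← mul_pow]
        exact pow_le_pow_left₀ (abs_nonneg _) (hcoord j (Finset.ne_of_mem_erase hj)) 2
    _ = ρ ^ 2 * ∑ j ∈ Finset.univ.erase k, ⟪y, v j⟫ ^ 2 := (Finset.mul_sum _ _ _).symm
    _ ≤ ρ ^ 2 * ‖y‖ ^ 2 := by gcongr; exact hv.sum_inner_sq_le _ y
    _ = (ρ * ‖y‖) ^ 2 := (mul_pow _ _ _).symm

end Orthonormal

section RitzProjection

variable {V : Type*} [NormedAddCommGroup V] [InnerProductSpace ℝ V]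

theorem sub_mul_inner_ritz_eq {B : V →ₗ[ℝ] V →ₗ[ℝ] ℝ} {u Pu w : V} {lam μ : ℝ}
    (hu : B u w = lam * ⟪u, w⟫) (hPu : B Pu w = μ * ⟪Pu, w⟫) (hritz : B (u - Pu) w = 0) :
    (μ - lam) * ⟪Pu, w⟫ = lam * ⟪u - Pu, w⟫ := by
  rw [map_sub, LinearMap.sub_apply] at hritz
  rw [inner_sub_left]
  linear_combination hu - hPu - hritz

theorem abs_inner_ritz_le {B : V →ₗ[ℝ] V →ₗ[ℝ] ℝ} {u Pu w : V} {lam μ ρ : ℝ}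
    (hu : B u w = lam * ⟪u, w⟫) (hPu : B Pu w = μ * ⟪Pu, w⟫) (hritz : B (u - Pu) w = 0)
    (hne : lam ≠ μ) (hρ : |lam| / |lam - μ| ≤ ρ) :
    |⟪Pu, w⟫| ≤ ρ * |⟪u - Pu, w⟫| := by
  have hgap : 0 < |lam - μ| := abs_pos.mpr (sub_ne_zero.mpr hne)
  have hcoeff : |lam - μ| * |⟪Pu, w⟫| = |lam| * |⟪u - Pu, w⟫| := by
    rw [← abs_mul, ← abs_mul, ← sub_mul_inner_ritz_eq hu hPu hritz, ← abs_neg, ← neg_mul, neg_sub]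
  calc |⟪Pu, w⟫| = |lam| / |lam - μ| * |⟪u - Pu, w⟫| := by
        rw [div_mul_eq_mul_div, ← hcoeff, mul_div_cancel_left₀ _ hgap.ne']
    _ ≤ ρ * |⟪u - Pu, w⟫| := by gcongr

end RitzProjection

theorem stmt_12_general {V : Type*} [NormedAddCommGroup V] [InnerProductSpace ℝ V]
    {n : ℕ} (B : V →ₗ[ℝ] V →ₗ[ℝ] ℝ)
    (W : Submodule ℝ V) (uh : Fin n → V) (lamh : Fin n → ℝ)
    (huhW : ∀ j, uh j ∈ W) (hon : Orthonormal ℝ uh)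
    (hspan : Submodule.span ℝ (Set.range uh) = W)
    (heig : ∀ w ∈ W, ∀ j, B w (uh j) = lamh j * ⟪w, uh j⟫)
    (u : V) (lam : ℝ) (hu : ∀ w ∈ W, B u w = lam * ⟪u, w⟫)
    (Pu : V) (hPu : Pu ∈ W) (hritz : ∀ w ∈ W, B (u - Pu) w = 0)
    (k : Fin n) (hk : ∀ j, j ≠ k → lam ≠ lamh j)
    (ρ : ℝ) (hρ0 : 0 ≤ ρ)
    (hρ : ∀ j, j ≠ k → |lam| / |lam - lamh j| ≤ ρ) :
    ‖Pu - ⟪Pu, uh k⟫ • uh k‖ ≤ ρ * ‖u - Pu‖ := by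
  refine hon.norm_sub_inner_smul_le_of_abs_inner_le (hspan ▸ hPu) k hρ0 fun j hj => ?_
  exact abs_inner_ritz_le (hu _ (huhW j)) (heig Pu hPu j) (hritz _ (huhW j)) (hk j hj) (hρ j hj)

/-- with `u₁^h, …, u_n^h` an orthonormal eigenbasis of the
discrete problem on `W`, `Πu` the Ritz projection of `u`, and
`ρ = max_{j≠k} |λ|/|λ − λ_j^h|` (formalized as: `ρ ≥ 0` is any upper bound of
the quotients `|λ|/|λ − λ_j^h|`, `j ≠ k`), one has
`‖Πu − ⟨Πu, u_k^h⟩ u_k^h‖ ≤ ρ ‖u − Πu‖`. -/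
theorem stmt_12 {V : Type*} [NormedAddCommGroup V] [InnerProductSpace ℝ V]
    {n : ℕ} (B : V →ₗ[ℝ] V →ₗ[ℝ] ℝ)
    (hsymm : ∀ x y : V, B x y = B y x)
    (W : Submodule ℝ V) (uh : Fin n → V) (lamh : Fin n → ℝ)
    (huhW : ∀ j, uh j ∈ W) (hon : Orthonormal ℝ uh)
    (hspan : Submodule.span ℝ (Set.range uh) = W)
    (heig : ∀ w ∈ W, ∀ j, B w (uh j) = lamh j * ⟪w, uh j⟫)
    (u : V) (lam : ℝ) (hu : ∀ w ∈ W, B u w = lam * ⟪u, w⟫)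
    (Pu : V) (hPu : Pu ∈ W) (hritz : ∀ w ∈ W, B (u - Pu) w = 0)
    (k : Fin n) (hk : ∀ j, j ≠ k → lam ≠ lamh j)
    (ρ : ℝ) (hρ0 : 0 ≤ ρ)
    (hρ : ∀ j, j ≠ k → |lam| / |lam - lamh j| ≤ ρ) :
    ‖Pu - ⟪Pu, uh k⟫ • uh k‖ ≤ ρ * ‖u - Pu‖ :=
  stmt_12_general B W uh lamh huhW hon hspan heig u lam hu Pu hPu hritz k hk ρ hρ0 hρ
end
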